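/- Let k ≥ 2 and let F be a Boolean polynomial involving only the variables X_1, …, X_j with j < k. Then both sequences {S(τ_{n,k} + F)}_{n≥k} and {S(τ_{n,k} + F + X_n + X_n X_{n−1} + X_n X_{n−1} X_{n−2} + ⋯ + X_n X_{n−1} ⋯ X_{n−k+2})}_{n≥k} satisfy the homogeneous linear recurrence with integer coefficients whose characteristic polynomial is p_k(X) = X^k − 2(X^{k−2} + X^{k−3} + ⋯ + X + 1). -/

import Mathlib

open Finset

/-- Exponential sum of a Boolean function in `n` variables. -/
noncomputable def boolExpSum (n : ℕ) (F : (Fin n → ZMod 2) → ZMod 2) : ℤ :=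
  ∑ x : Fin n → ZMod 2, (-1 : ℤ) ^ (F x).val

/-- Extension of a vector `x ∈ F₂ⁿ` to a function on `ℕ` (index `i` corresponds
to the variable `X_{i+1}`; out-of-range indices give `0`). -/
def extVar {n : ℕ} (x : Fin n → ZMod 2) : ℕ → ZMod 2 :=
  fun i => if h : i < n then x ⟨i, h⟩ else 0

/-- The trapezoid Boolean function `τ_{n,k} = ∑_{j=1}^{n−k+1} X_j X_{j+1} ⋯ X_{j+k−1}`. -/
def trapezoid (k n : ℕ) (x : Fin n → ZMod 2) : ZMod 2 :=
  ∑ j ∈ Finset.range (n - k + 1), ∏ i ∈ Finset.range k, extVar x (j + i)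

/-- The tail perturbation `X_n + X_n X_{n−1} + X_n X_{n−1} X_{n−2} + ⋯ + X_n X_{n−1} ⋯ X_{n−k+2}`. -/
def tailPert (k n : ℕ) (x : Fin n → ZMod 2) : ZMod 2 :=
  ∑ t ∈ Finset.range (k - 1), ∏ l ∈ Finset.range (t + 1), extVar x (n - 1 - l)

lemma zmod_pow_add (a b : ZMod 2) : ((-1:ℤ))^((a+b).val) = (-1)^a.val * (-1)^b.val := by
  revert a b; decide

lemma zmod_pow_add_one (a : ZMod 2) : ((-1:ℤ))^((a+1).val) = -((-1)^a.val) := by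
  revert a; decide

lemma sum_zmod2 (h : ZMod 2 → ℤ) : ∑ b : ZMod 2, h b = h 0 + h 1 := by
  rw [show (univ : Finset (ZMod 2)) = {0,1} from by decide, Finset.sum_pair (by decide)]

lemma boolExpSum_congr {m : ℕ} {f g : (Fin m → ZMod 2) → ZMod 2} (h : ∀ x, f x = g x) :
    boolExpSum m f = boolExpSum m g := by
  unfold boolExpSum
  exact Finset.sum_congr rfl fun x _ => by rw [h x]

lemma boolExpSum_add_one {m : ℕ} (f : (Fin m → ZMod 2) → ZMod 2) :
    boolExpSum m (fun x => f x + 1) = - boolExpSum m f := by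
  unfold boolExpSum
  rw [← Finset.sum_neg_distrib]
  exact Finset.sum_congr rfl fun x _ => zmod_pow_add_one (f x)

lemma boolExpSum_succ (m : ℕ) (G : (Fin (m+1) → ZMod 2) → ZMod 2) :
    boolExpSum (m+1) G
      = boolExpSum m (fun x => G (Fin.snoc x 0)) + boolExpSum m (fun x => G (Fin.snoc x 1)) := by
  unfold boolExpSum
  rw [← Equiv.sum_comp (Fin.snocEquiv (fun _ => ZMod 2)) (fun x => ((-1:ℤ)) ^ (G x).val)]
  rw [Fintype.sum_prod_type]
  rw [sum_zmod2 (fun b => ∑ x : Fin m → ZMod 2, (-1:ℤ) ^ (G (Fin.snocEquiv _ (b, x))).val)]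
  simp [Fin.snocEquiv, add_comm]

lemma extVar_snoc_lt {m : ℕ} (x : Fin m → ZMod 2) (b : ZMod 2) {i : ℕ} (h : i < m) :
    extVar (Fin.snoc x b) i = extVar x i := by
  unfold extVar
  rw [dif_pos (by omega : i < m + 1), dif_pos h]
  simp [Fin.snoc, h]

lemma extVar_snoc_self {m : ℕ} (x : Fin m → ZMod 2) (b : ZMod 2) :
    extVar (Fin.snoc x b) m = b := by
  unfold extVar
  rw [dif_pos (by omega : m < m + 1)]
  simp [Fin.snoc]

lemma trapezoid_snoc {k m : ℕ} (hk : 1 ≤ k) (hm : k ≤ m) (x : Fin m → ZMod 2) (b : ZMod 2) :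
    trapezoid k (m+1) (Fin.snoc x b)
      = trapezoid k m x + b * ∏ l ∈ Finset.range (k-1), extVar x (m-1-l) := by
  obtain ⟨K, rfl⟩ : ∃ K, k = K + 1 := ⟨k-1, by omega⟩
  unfold trapezoid
  simp only [Nat.add_sub_cancel]
  rw [show m + 1 - (K+1) + 1 = (m - (K+1) + 1) + 1 by omega, Finset.sum_range_succ]
  congr 1
  · apply Finset.sum_congr rfl
    intro p hp
    apply Finset.prod_congr rfl
    intro i hi
    simp only [Finset.mem_range] at hp hi
    exact extVar_snoc_lt x b (by omega)
  · rw [Finset.prod_range_succ, show m - (K+1) + 1 + K = m by omega, extVar_snoc_self, mul_comm]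
    congr 1
    rw [← Finset.prod_range_reflect]
    apply Finset.prod_congr rfl
    intro l hl
    simp only [Finset.mem_range] at hl
    rw [extVar_snoc_lt x b (by omega)]
    congr 1
    omega

lemma tailterm_snoc {m s : ℕ} (hs : 1 ≤ s) (hsm : s ≤ m) (x : Fin m → ZMod 2) (b : ZMod 2) :
    ∏ l ∈ Finset.range s, extVar (Fin.snoc x b) (m - l)
      = b * ∏ l ∈ Finset.range (s-1), extVar x (m-1-l) := by
  obtain ⟨S, rfl⟩ : ∃ S, s = S + 1 := ⟨s-1, by omega⟩
  rw [Finset.prod_range_succ']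
  simp only [Nat.sub_zero, Nat.add_sub_cancel]
  rw [extVar_snoc_self, mul_comm]
  congr 1
  apply Finset.prod_congr rfl
  intro l hl
  simp only [Finset.mem_range] at hl
  rw [extVar_snoc_lt x b (by omega)]
  congr 1
  omega

lemma tailsum_snoc {k r m : ℕ} (hr : r ≤ k - 1) (hk : 2 ≤ k) (hm : k ≤ m)
    (x : Fin m → ZMod 2) (b : ZMod 2) :
    ∑ s ∈ Finset.Ico (k-r) k, ∏ l ∈ Finset.range s, extVar (Fin.snoc x b) (m - l)
      = b * ∑ s ∈ Finset.Ico (k-r-1) (k-1), ∏ l ∈ Finset.range s, extVar x (m-1-l) := by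
  rw [Finset.mul_sum]
  rw [Finset.sum_Ico_eq_sum_range, Finset.sum_Ico_eq_sum_range]
  rw [show k - (k - r) = r by omega, show k - 1 - (k - r - 1) = r by omega]
  apply Finset.sum_congr rfl
  intro i hi
  simp only [Finset.mem_range] at hi
  rw [tailterm_snoc (by omega) (by omega)]
  congr 3
  omega

noncomputable def Wseq (k : ℕ) (F : (ℕ → ZMod 2) → ZMod 2) (r m : ℕ) : ℤ :=
  boolExpSum m (fun x => trapezoid k m x + F (extVar x) +
    ∑ s ∈ Finset.Ico (k-r) k, ∏ l ∈ Finset.range s, extVar x (m-1-l))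

lemma F_snoc {j k m : ℕ} {F : (ℕ → ZMod 2) → ZMod 2}
    (hF : ∀ x y : ℕ → ZMod 2, (∀ i < j, x i = y i) → F x = F y)
    (hj : j < k) (hm : k ≤ m) (x : Fin m → ZMod 2) (b : ZMod 2) :
    F (extVar (Fin.snoc x b)) = F (extVar x) :=
  hF _ _ fun i hi => extVar_snoc_lt x b (by omega)

lemma peel1 {k j r m : ℕ} {F : (ℕ → ZMod 2) → ZMod 2} (hk : 2 ≤ k) (hj : j < k)
    (hF : ∀ x y : ℕ → ZMod 2, (∀ i < j, x i = y i) → F x = F y)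
    (hr : r + 1 ≤ k - 1) (hm : k ≤ m) :
    Wseq k F r (m+1) = Wseq k F 0 m + Wseq k F (r+1) m := by
  obtain ⟨K, rfl⟩ : ∃ K, k = K + 2 := ⟨k-2, by omega⟩
  unfold Wseq
  rw [boolExpSum_succ]
  congr 1
  · apply boolExpSum_congr; intro x
    simp only [Nat.add_sub_cancel]
    rw [trapezoid_snoc (by omega) (by omega), tailsum_snoc (by omega) hk (by omega),
        F_snoc hF hj (by omega)]
    simp [Finset.Ico_self]
  · apply boolExpSum_congr; intro x
    simp only [Nat.add_sub_cancel]
    rw [trapezoid_snoc (by omega) (by omega), tailsum_snoc (by omega) hk (by omega),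
        F_snoc hF hj (by omega)]
    rw [one_mul, one_mul]
    rw [show K + 2 - 1 = K + 1 from rfl,
        show K + 2 - r - 1 = K + 1 - r from by omega,
        show K + 2 - (r + 1) = K + 1 - r from by omega,
        show (K + 2 : ℕ) = (K + 1) + 1 from rfl,
        Finset.sum_Ico_succ_top (by omega : K + 1 - r ≤ K + 1)]
    ring

lemma peel2 {k j m : ℕ} {F : (ℕ → ZMod 2) → ZMod 2} (hk : 2 ≤ k) (hj : j < k)
    (hF : ∀ x y : ℕ → ZMod 2, (∀ i < j, x i = y i) → F x = F y)
    (hm : k ≤ m) :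
    Wseq k F (k-1) (m+1) = Wseq k F 0 m - Wseq k F (k-1) m := by
  obtain ⟨K, rfl⟩ : ∃ K, k = K + 2 := ⟨k-2, by omega⟩
  unfold Wseq
  rw [boolExpSum_succ, sub_eq_add_neg]
  congr 1
  · apply boolExpSum_congr; intro x
    simp only [Nat.add_sub_cancel]
    rw [trapezoid_snoc (by omega) (by omega), tailsum_snoc (by omega) hk (by omega),
        F_snoc hF hj (by omega)]
    simp [Finset.Ico_self]
  · rw [← boolExpSum_add_one]
    apply boolExpSum_congr; intro x
    simp only [Nat.add_sub_cancel]
    rw [trapezoid_snoc (by omega) (by omega), tailsum_snoc (by omega) hk (by omega),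
        F_snoc hF hj (by omega)]
    rw [one_mul, one_mul]
    rw [show K + 2 - 1 = K + 1 from rfl,
        show K + 2 - (K + 1) - 1 = 0 from by omega,
        show K + 2 - (K + 1) = 1 from by omega,
        Finset.sum_eq_sum_Ico_succ_bot (by omega : (0:ℕ) < K + 1),
        show (0:ℕ) + 1 = 1 from rfl,
        show (K + 2 : ℕ) = (K + 1) + 1 from rfl,
        Finset.sum_Ico_succ_top (by omega : (1:ℕ) ≤ K + 1)]
    simp only [Finset.prod_range_zero]
    ring
section Main
variable {k j : ℕ} {F : (ℕ → ZMod 2) → ZMod 2}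

lemma chain (hk : 2 ≤ k) (hj : j < k)
    (hF : ∀ x y : ℕ → ZMod 2, (∀ i < j, x i = y i) → F x = F y) :
    ∀ r, r ≤ k - 1 → ∀ m, k ≤ m →
      Wseq k F (k-1-r) (m+r) = (∑ i ∈ Finset.range r, Wseq k F 0 (m+i)) + Wseq k F (k-1) m := by
  intro r
  induction r with
  | zero => intro _ m hm; simp
  | succ r ih =>
    intro hr m hm
    have h1 : (k - 1 - (r+1)) + 1 ≤ k - 1 := by omega
    have hp : Wseq k F (k-1-(r+1)) ((m+r)+1)
        = Wseq k F 0 (m+r) + Wseq k F ((k-1-(r+1))+1) (m+r) :=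
      peel1 hk hj hF h1 (by omega)
    rw [show m + (r+1) = (m+r)+1 from by omega, hp,
        show k - 1 - (r+1) + 1 = k - 1 - r from by omega,
        ih (by omega) m hm, Finset.sum_range_succ]
    ring

lemma recA (hk : 2 ≤ k) (hj : j < k)
    (hF : ∀ x y : ℕ → ZMod 2, (∀ i < j, x i = y i) → F x = F y) :
    ∀ m, k ≤ m →
      Wseq k F 0 (m+k) = 2 * ∑ i ∈ Finset.range (k-1), Wseq k F 0 (m+i) := by
  obtain ⟨K, rfl⟩ : ∃ K, k = K + 2 := ⟨k-2, by omega⟩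
  intro m hm
  have c1 := chain hk hj hF (K+1) (by omega) (m+1) (by omega)
  have c0 := chain hk hj hF (K+1) (by omega) m hm
  have p2 := peel2 hk hj hF hm
  rw [show K + 2 - 1 - (K+1) = 0 from by omega, show (m+1) + (K+1) = m + (K+2) from by omega,
      show K + 2 - 1 = K + 1 from rfl] at c1
  rw [show K + 2 - 1 - (K+1) = 0 from by omega, show K + 2 - 1 = K + 1 from rfl] at c0
  rw [show K + 2 - 1 = K + 1 from rfl] at p2 ⊢
  have hS1 : (∑ i ∈ Finset.range (K+1), Wseq (K+2) F 0 (m+1+i)) + Wseq (K+2) F 0 m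
      = ∑ i ∈ Finset.range (K+2), Wseq (K+2) F 0 (m+i) := by
    conv_rhs => rw [show (K+2) = (K+1)+1 from rfl, Finset.sum_range_succ']
    congr 1
    apply Finset.sum_congr rfl
    intro i _
    exact congrArg (Wseq (K+2) F 0) (by omega)
  have hS0 : (∑ i ∈ Finset.range (K+1), Wseq (K+2) F 0 (m+i)) + Wseq (K+2) F 0 (m+(K+1))
      = ∑ i ∈ Finset.range (K+2), Wseq (K+2) F 0 (m+i) := (Finset.sum_range_succ _ _).symm
  linarith [c1, c0, p2, hS1, hS0]

lemma allRec (hk : 2 ≤ k) (hj : j < k)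
    (hF : ∀ x y : ℕ → ZMod 2, (∀ i < j, x i = y i) → F x = F y) :
    ∀ r, r ≤ k - 1 → ∀ m, k ≤ m →
      Wseq k F r (m+k) = 2 * ∑ i ∈ Finset.range (k-1), Wseq k F r (m+i) := by
  intro r
  induction r with
  | zero => intro _ m hm; exact recA hk hj hF m hm
  | succ r ih =>
    intro hr m hm
    have e : ∀ m', k ≤ m' → Wseq k F (r+1) m' = Wseq k F r (m'+1) - Wseq k F 0 m' := by
      intro m' hm'
      have h := peel1 (r := r) hk hj hF (by omega) hm'
      linarith [h]
    rw [e (m+k) (by omega), show m+k+1 = (m+1)+k from by omega, ih (by omega) (m+1) (by omega),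
        recA hk hj hF m hm, ← mul_sub, ← Finset.sum_sub_distrib]
    congr 1
    apply Finset.sum_congr rfl
    intro i hi
    simp only [Finset.mem_range] at hi
    rw [e (m+i) (by omega), show m+i+1 = (m+1)+i from by omega]

end Main
lemma Wseq_zero (k : ℕ) (F : (ℕ → ZMod 2) → ZMod 2) (m : ℕ) :
    Wseq k F 0 m = boolExpSum m (fun x => trapezoid k m x + F (extVar x)) := by
  unfold Wseq
  apply boolExpSum_congr
  intro x
  simp

lemma Wseq_top (k : ℕ) (hk : 2 ≤ k) (F : (ℕ → ZMod 2) → ZMod 2) (m : ℕ) :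
    Wseq k F (k-1) m
      = boolExpSum m (fun x => trapezoid k m x + F (extVar x) + tailPert k m x) := by
  unfold Wseq
  apply boolExpSum_congr
  intro x
  congr 1
  unfold tailPert
  rw [show k - (k-1) = 1 from by omega, Finset.sum_Ico_eq_sum_range,
      show k - 1 = k - 1 from rfl]
  apply Finset.sum_congr rfl
  intro t _
  apply Finset.prod_congr _ (fun _ _ => rfl)
  rw [Nat.add_comm]

/-- Let `k ≥ 2` and let `F` be a Boolean polynomial involving only the variables
`X₁, …, X_j` with `j < k` (formalized as a Boolean function on `ℕ`-indexed inputs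
depending only on the first `j` coordinates).  Then both sequences
`{S(τ_{n,k} + F)}` and `{S(τ_{n,k} + F + Xₙ + XₙX_{n−1} + ⋯ + XₙX_{n−1}⋯X_{n−k+2})}`
satisfy the homogeneous linear recurrence with characteristic polynomial
`p_k(X) = X^k − 2(X^{k−2} + ⋯ + X + 1)`. -/
theorem trapezoid_plus_expSum_linear_recurrence (k j : ℕ) (hk : 2 ≤ k) (hj : j < k)
    (F : (ℕ → ZMod 2) → ZMod 2)
    (hF : ∀ x y : ℕ → ZMod 2, (∀ i < j, x i = y i) → F x = F y)
    (n : ℕ) (hn : 2 * k ≤ n) :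
    (boolExpSum n (fun x => trapezoid k n x + F (extVar x)) =
      2 * ∑ l ∈ Finset.Icc 2 k,
        boolExpSum (n - l) (fun x => trapezoid k (n - l) x + F (extVar x))) ∧
    (boolExpSum n (fun x => trapezoid k n x + F (extVar x) + tailPert k n x) =
      2 * ∑ l ∈ Finset.Icc 2 k,
        boolExpSum (n - l) (fun x => trapezoid k (n - l) x + F (extVar x) + tailPert k (n - l) x)) := by
  have hconv : ∀ g : ℕ → ℤ,
      ∑ l ∈ Finset.Icc 2 k, g (n - l) = ∑ i ∈ Finset.range (k-1), g (n - k + i) := by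
    intro g
    rw [← Finset.Ico_add_one_right_eq_Icc, Finset.sum_Ico_eq_sum_range, show k + 1 - 2 = k - 1 from by omega,
        ← Finset.sum_range_reflect]
    apply Finset.sum_congr rfl
    intro i hi
    simp only [Finset.mem_range] at hi
    congr 1
    omega
  constructor
  · have h := allRec hk hj hF 0 (by omega) (n-k) (by omega)
    rw [show n - k + k = n from by omega] at h
    have hc := hconv (fun t => Wseq k F 0 t)
    calc boolExpSum n (fun x => trapezoid k n x + F (extVar x))
        = Wseq k F 0 n := (Wseq_zero k F n).symm
      _ = 2 * ∑ i ∈ Finset.range (k-1), Wseq k F 0 (n - k + i) := h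
      _ = 2 * ∑ l ∈ Finset.Icc 2 k, Wseq k F 0 (n - l) := by rw [hc]
      _ = _ := by
          congr 1
          exact Finset.sum_congr rfl fun l _ => Wseq_zero k F (n - l)
  · have h := allRec hk hj hF (k-1) le_rfl (n-k) (by omega)
    rw [show n - k + k = n from by omega] at h
    have hc := hconv (fun t => Wseq k F (k-1) t)
    calc boolExpSum n (fun x => trapezoid k n x + F (extVar x) + tailPert k n x)
        = Wseq k F (k-1) n := (Wseq_top k hk F n).symm
      _ = 2 * ∑ i ∈ Finset.range (k-1), Wseq k F (k-1) (n - k + i) := h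
      _ = 2 * ∑ l ∈ Finset.Icc 2 k, Wseq k F (k-1) (n - l) := by rw [hc]
      _ = _ := by
          congr 1
          exact Finset.sum_congr rfl fun l _ => Wseq_top k hk F (n - l)
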